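/- arXiv:1206.0089 — 6 statements merged into one kernel-verified Lean document; each statement's English description precedes it below -/
import Mathlib

section
/- Let f be a natural number, S a finite multiset of real numbers, and T a sub-multiset of S with card S − card T ≤ f and T nonempty. If v is a real number such that at least f+1 elements of S (counted with multiplicity) are ≥ v, then v is less than or equal to the maximum element of T; symmetrically, if at least f+1 elements of S (counted with multiplicity) are ≤ v, then v is greater than or equal to the minimum element of T. -/
lemma aux_exists (f : ℕ) (S T : Multiset ℝ) (hTS : T ≤ S)
    (hcard : S.card - T.card ≤ f) (p : ℝ → Prop) [DecidablePred p]
    (h : f + 1 ≤ (S.filter p).card) : ∃ x ∈ T, p x := by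
  have hS : T + (S - T) = S := add_tsub_cancel_of_le hTS
  have h1 : (S.filter p).card = (T.filter p).card + ((S - T).filter p).card := by
    rw [← hS, Multiset.filter_add, Multiset.card_add, hS]
  have h2 : ((S - T).filter p).card ≤ f := by
    calc ((S - T).filter p).card ≤ (S - T).card := Multiset.card_le_card (Multiset.filter_le _ _)
    _ = S.card - T.card := Multiset.card_sub hTS
    _ ≤ f := hcard
  have h3 : 0 < (T.filter p).card := by omega
  obtain ⟨x, hx⟩ := Multiset.card_pos_iff_exists_mem.mp h3
  rw [Multiset.mem_filter] at hx
  exact ⟨x, hx.1, hx.2⟩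

/-- If `T` is a sub-multiset of `S` with `card S − card T ≤ f` and `T ≠ 0`,
then any value `v` with at least `f+1` elements of `S` above it (resp. below it) is
below the maximum (resp. above the minimum) of `T`. -/
theorem stmt_0 (f : ℕ) (S T : Multiset ℝ) (hTS : T ≤ S)
    (hcard : S.card - T.card ≤ f) (hT : T ≠ 0) (v : ℝ) :
    (f + 1 ≤ (S.filter (fun x => v ≤ x)).card →
      v ≤ T.toFinset.max' (Multiset.toFinset_nonempty.mpr hT)) ∧
    (f + 1 ≤ (S.filter (fun x => x ≤ v)).card →
      T.toFinset.min' (Multiset.toFinset_nonempty.mpr hT) ≤ v) := by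
  constructor
  · intro h
    obtain ⟨x, hxT, hx⟩ := aux_exists f S T hTS hcard _ h
    exact le_trans hx (Finset.le_max' _ _ (Multiset.mem_toFinset.mpr hxT))
  · intro h
    obtain ⟨x, hxT, hx⟩ := aux_exists f S T hTS hcard _ h
    exact le_trans (Finset.min'_le _ _ (Multiset.mem_toFinset.mpr hxT)) hx
end

section
/- Let f be a natural number and S a finite multiset of real numbers with card S ≥ 2f+1. Let S' be the multiset obtained from S by removing the f largest elements and removing the f smallest elements. Then every element w of S' satisfies: at least f+1 elements of S (counted with multiplicity) are ≥ w, and at least f+1 elements of S (counted with multiplicity) are ≤ w. -/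
/-- The multiset obtained from `S` by removing its `k` largest elements (the last
`min k (card S)` entries of the ascending sorted list of `S`). -/
noncomputable def Multiset.removeLargest (S : Multiset ℝ) (k : ℕ) : Multiset ℝ :=
  ((S.sort (· ≤ ·)).take ((S.sort (· ≤ ·)).length - k) : List ℝ)

/-- The multiset obtained from `S` by removing its `k` smallest elements (the first
`min k (card S)` entries of the ascending sorted list of `S`). -/
noncomputable def Multiset.removeSmallest (S : Multiset ℝ) (k : ℕ) : Multiset ℝ :=
  ((S.sort (· ≤ ·)).drop k : List ℝ)

/-!
Write `l` for the ascending sort of `S` and `n = card S`. The surviving values are the entries of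
`l` at positions `f, …, n - f - 1`. An entry at position `i` is `≥` the `i` entries before it and
`≤` the `n - i - 1` entries after it, and counting itself as well gives at least `f + 1` in both
directions.
-/

namespace List

variable {α : Type*} [Preorder α] [DecidableLE α]

theorem length_add_one_le_countP_le_of_mem_right {l₁ l₂ : List α} {w : α}
    (h : (l₁ ++ l₂).Pairwise (· ≤ ·)) (hw : w ∈ l₂) :
    l₁.length + 1 ≤ (l₁ ++ l₂).countP (· ≤ w) := by
  have hl₁ : l₁.countP (· ≤ w) = l₁.length :=
    countP_eq_length.mpr fun a ha => decide_eq_true ((pairwise_append.mp h).2.2 a ha w hw)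
  have hl₂ : 0 < l₂.countP (· ≤ w) := countP_pos_iff.mpr ⟨w, hw, decide_eq_true le_rfl⟩
  rw [countP_append, hl₁]
  omega

theorem length_add_one_le_countP_ge_of_mem_left {l₁ l₂ : List α} {w : α}
    (h : (l₁ ++ l₂).Pairwise (· ≤ ·)) (hw : w ∈ l₁) :
    l₂.length + 1 ≤ (l₁ ++ l₂).countP (w ≤ ·) := by
  have hl₂ : l₂.countP (w ≤ ·) = l₂.length :=
    countP_eq_length.mpr fun b hb => decide_eq_true ((pairwise_append.mp h).2.2 w hw b hb)
  have hl₁ : 0 < l₁.countP (w ≤ ·) := countP_pos_iff.mpr ⟨w, hw, decide_eq_true le_rfl⟩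
  rw [countP_append, hl₂]
  omega

end List

theorem Multiset.card_filter_eq_countP_sort {α : Type*} [LinearOrder α] (S : Multiset α)
    (p : α → Prop) [DecidablePred p] :
    (S.filter p).card = (S.sort (· ≤ ·)).countP p := by
  conv_lhs => rw [← S.sort_eq (· ≤ ·)]
  rw [← countP_eq_card_filter, coe_countP]

theorem Multiset.sort_coe_of_pairwise {α : Type*} [LinearOrder α] {l : List α}
    (h : l.Pairwise (· ≤ ·)) : (l : Multiset α).sort (· ≤ ·) = l :=
  List.mergeSort_eq_self _ h

theorem stmt_1_general (f : ℕ) (S : Multiset ℝ) :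
    ∀ w ∈ (S.removeLargest f).removeSmallest f,
      f + 1 ≤ (S.filter (fun x => w ≤ x)).card ∧
      f + 1 ≤ (S.filter (fun x => x ≤ w)).card := by
  intro w hw
  rw [Multiset.card_filter_eq_countP_sort, Multiset.card_filter_eq_countP_sort]
  set l := S.sort (· ≤ ·)
  set t := l.take (l.length - f)
  have hl : l.Pairwise (· ≤ ·) := S.pairwise_sort _
  have ht : t.Pairwise (· ≤ ·) := hl.sublist (List.take_sublist _ _)
  rw [Multiset.removeSmallest, Multiset.removeLargest, Multiset.sort_coe_of_pairwise ht,
    Multiset.mem_coe] at hw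
  have hwt : w ∈ t := List.mem_of_mem_drop hw
  have hft : f < t.length := by
    by_contra! h
    simp [List.drop_eq_nil_of_le h] at hw
  constructor
  · have key := List.length_add_one_le_countP_ge_of_mem_left (l₂ := l.drop (l.length - f))
      (by rwa [List.take_append_drop]) hwt
    rw [List.take_append_drop, List.length_drop] at key
    simp only [t, List.length_take] at hft
    omega
  · have key := List.length_add_one_le_countP_le_of_mem_right (l₁ := t.take f)
      (by rwa [List.take_append_drop]) hw
    rw [List.take_append_drop, List.length_take, min_eq_left hft.le] at key
    exact key.trans (List.take_sublist _ _).countP_le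

/-- if `card S ≥ 2f+1` and `S'` is obtained from `S` by removing the `f`
largest and the `f` smallest elements, then every `w ∈ S'` has at least `f+1` elements
of `S` that are `≥ w` and at least `f+1` elements of `S` that are `≤ w`. -/
theorem stmt_1 (f : ℕ) (S : Multiset ℝ) (hS : 2 * f + 1 ≤ S.card) :
    ∀ w ∈ (S.removeLargest f).removeSmallest f,
      f + 1 ≤ (S.filter (fun x => w ≤ x)).card ∧
      f + 1 ≤ (S.filter (fun x => x ≤ w)).card :=
  stmt_1_general f S
end

section
/- Let f be a natural number, a ≤ b real numbers, S a finite multiset of real numbers with card S ≥ 2f+1, and T a sub-multiset of S with card S − card T ≤ f such that every element of T lies in the closed interval [a, b]. Let v be a real number with a ≤ v ≤ b. Let S' be the multiset obtained from S by removing the f largest elements and removing the f smallest elements. Then every element of S' lies in [a, b], and the average (v + Σ_{w ∈ S'} w) / (card S' + 1) lies in [a, b]. -/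
/-! Among any `f + 1` gathered values at least one was sent by a correct node, so the
`f + 1` smallest and the `f + 1` largest values each contain a value in `[a, b]`; every value
surviving the trimming lies between these two, and so does the average with `v`. -/

theorem Multiset.exists_mem_of_card_sub_lt_card {α : Type*} [DecidableEq α]
    {S T M : Multiset α} (hT : T ≤ S) (hM : M ≤ S) (hcard : S.card - T.card < M.card) :
    ∃ x ∈ M, x ∈ T := by
  by_contra! hdisj
  have hle : M + T ≤ S := by
    rw [Multiset.add_eq_union_iff_disjoint.mpr (Multiset.disjoint_left.mpr fun hx => hdisj _ hx)]
    exact Multiset.union_le hM hT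
  have := Multiset.card_le_card hle
  rw [Multiset.card_add] at this
  omega

theorem List.Pairwise.le_of_mem_take_succ_of_mem_drop {α : Type*} [Preorder α] {L : List α}
    (hL : L.Pairwise (· ≤ ·)) {k : ℕ} {x y : α} (hx : x ∈ L.take (k + 1))
    (hy : y ∈ L.drop k) : x ≤ y := by
  obtain ⟨i, hi, rfl⟩ := List.mem_iff_getElem.mp hx
  obtain ⟨j, hj, rfl⟩ := List.mem_iff_getElem.mp hy
  simp only [List.getElem_take, List.getElem_drop]
  simp only [List.length_take, List.length_drop] at hi hj
  exact hL.rel_get_of_le (a := ⟨i, by omega⟩) (b := ⟨k + j, by omega⟩)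
    (Fin.mk_le_mk.mpr (by omega))

section Sorted

variable {α : Type*} [Preorder α] {L : List α} {T : Multiset α} {k : ℕ} {w : α}

theorem List.Pairwise.exists_le_of_mem_drop (hL : L.Pairwise (· ≤ ·)) (hT : T ≤ ↑L)
    (hk : L.length - T.card ≤ k) (hw : w ∈ L.drop k) : ∃ t ∈ T, t ≤ w := by
  classical
  have hkL : k < L.length := by
    have := List.length_pos_of_mem hw
    simp only [List.length_drop] at this
    omega
  obtain ⟨t, htM, htT⟩ := Multiset.exists_mem_of_card_sub_lt_card hT
    (M := ↑(L.take (k + 1))) (List.take_sublist _ _).subperm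
    (by simp only [Multiset.coe_card, List.length_take]; omega)
  exact ⟨t, htT, hL.le_of_mem_take_succ_of_mem_drop htM hw⟩

theorem List.Pairwise.exists_ge_of_mem_take (hL : L.Pairwise (· ≤ ·)) (hT : T ≤ ↑L)
    (hk : L.length - T.card ≤ k) (hw : w ∈ L.take (L.length - k)) : ∃ t ∈ T, w ≤ t := by
  classical
  have hkL : k < L.length := by
    have := List.length_pos_of_mem hw
    simp only [List.length_take] at this
    omega
  obtain ⟨t, htM, htT⟩ := Multiset.exists_mem_of_card_sub_lt_card hT
    (M := ↑(L.drop (L.length - k - 1))) (List.drop_sublist _ _).subperm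
    (by simp only [Multiset.coe_card, List.length_drop]; omega)
  have hw' : w ∈ L.take (L.length - k - 1 + 1) := by rwa [Nat.sub_add_cancel (by omega)]
  exact ⟨t, htT, hL.le_of_mem_take_succ_of_mem_drop hw' htM⟩

end Sorted

theorem Multiset.sort_removeLargest (S : Multiset ℝ) (k : ℕ) :
    (S.removeLargest k).sort (· ≤ ·) =
      (S.sort (· ≤ ·)).take ((S.sort (· ≤ ·)).length - k) :=
  List.Perm.eq_of_pairwise' (Multiset.pairwise_sort _ _)
    ((Multiset.pairwise_sort _ _).sublist (List.take_sublist _ _))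
    (by rw [← Multiset.coe_eq_coe, Multiset.sort_eq]; rfl)

theorem Multiset.mem_Icc_of_mem_removeSmallest_removeLargest {a b : ℝ} {S T : Multiset ℝ}
    {f : ℕ} (hTS : T ≤ S) (hf : S.card - T.card ≤ f) (hT : ∀ x ∈ T, x ∈ Set.Icc a b)
    {w : ℝ} (hw : w ∈ (S.removeLargest f).removeSmallest f) : w ∈ Set.Icc a b := by
  set L := S.sort (· ≤ ·)
  have hL : L.Pairwise (· ≤ ·) := Multiset.pairwise_sort _ _
  have hTL : T ≤ ↑L := by rwa [Multiset.sort_eq]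
  have hLf : L.length - T.card ≤ f := by rwa [Multiset.length_sort]
  have hw : w ∈ (L.take (L.length - f)).drop f := by
    rwa [Multiset.removeSmallest, Multiset.sort_removeLargest, Multiset.mem_coe] at hw
  obtain ⟨t, htT, htw⟩ :=
    hL.exists_le_of_mem_drop hTL hLf (((List.take_sublist _ _).drop f).mem hw)
  obtain ⟨t', htT', hwt'⟩ := hL.exists_ge_of_mem_take hTL hLf (List.mem_of_mem_drop hw)
  exact ⟨(hT t htT).1.trans htw, hwt'.trans (hT t' htT').2⟩

theorem Multiset.sum_div_card_mem_Icc {K : Type*} [Field K] [LinearOrder K] [IsStrictOrderedRing K]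
    {s : Multiset K} (hs : s ≠ 0) {a b : K} (h : ∀ x ∈ s, x ∈ Set.Icc a b) :
    s.sum / s.card ∈ Set.Icc a b := by
  have hcard : (0 : K) < s.card := by exact_mod_cast Multiset.card_pos.mpr hs
  have hlow := Multiset.card_nsmul_le_sum fun x hx => (h x hx).1
  have hhigh := Multiset.sum_le_card_nsmul s b fun x hx => (h x hx).2
  rw [nsmul_eq_mul] at hlow hhigh
  exact ⟨(le_div_iff₀ hcard).mpr (by linarith), (div_le_iff₀ hcard).mpr (by linarith)⟩

theorem stmt_2_general (f : ℕ) (a b : ℝ) (S T : Multiset ℝ)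
    (hTS : T ≤ S) (hf : S.card - T.card ≤ f)
    (hT : ∀ x ∈ T, x ∈ Set.Icc a b) (v : ℝ) (hv : a ≤ v) (hv' : v ≤ b) :
    (∀ w ∈ (S.removeLargest f).removeSmallest f, w ∈ Set.Icc a b) ∧
    (v + ((S.removeLargest f).removeSmallest f).sum) /
        (((S.removeLargest f).removeSmallest f).card + 1) ∈ Set.Icc a b := by
  have hmem : ∀ w ∈ (S.removeLargest f).removeSmallest f, w ∈ Set.Icc a b :=
    fun w hw => Multiset.mem_Icc_of_mem_removeSmallest_removeLargest hTS hf hT hw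
  refine ⟨hmem, ?_⟩
  have hcons : ∀ x ∈ v ::ₘ (S.removeLargest f).removeSmallest f, x ∈ Set.Icc a b := by
    simpa only [Multiset.mem_cons, forall_eq_or_imp] using ⟨⟨hv, hv'⟩, hmem⟩
  simpa only [Multiset.sum_cons, Multiset.card_cons, Nat.cast_add, Nat.cast_one] using
    Multiset.sum_div_card_mem_Icc Multiset.cons_ne_zero hcons

/-- validity of the symmetric reduce-and-average step. -/
theorem stmt_2 (f : ℕ) (a b : ℝ) (hab : a ≤ b) (S T : Multiset ℝ)
    (hScard : 2 * f + 1 ≤ S.card) (hTS : T ≤ S) (hf : S.card - T.card ≤ f)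
    (hT : ∀ x ∈ T, x ∈ Set.Icc a b) (v : ℝ) (hv : a ≤ v) (hv' : v ≤ b) :
    (∀ w ∈ (S.removeLargest f).removeSmallest f, w ∈ Set.Icc a b) ∧
    (v + ((S.removeLargest f).removeSmallest f).sum) /
        (((S.removeLargest f).removeSmallest f).card + 1) ∈ Set.Icc a b :=
  stmt_2_general f a b S T hTS hf hT v hv hv'
end

section
/- Let f be a natural number, a ≤ b real numbers, S a finite multiset of real numbers, and T a sub-multiset of S with card S − card T ≤ f such that every element of T lies in the closed interval [a, b]. Let v be a real number with a ≤ v ≤ b, and suppose at least f+1 elements of S (counted with multiplicity) are ≥ v. Let S' be the multiset obtained from S by removing the f largest elements of S and additionally removing every element that is among the f smallest elements of S and is strictly less than v. Then every element of S' lies in [a, b], and the average (v + Σ_{w ∈ S'} w) / (card S' + 1) lies in [a, b]. -/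
/-!
A value `w` that survives the reduction sits at a position `i` of the sorted list with
`i + f < card S`, so at least `f + 1` gathered values are `≥ w`; as at most `f` gathered
values are not correct, one of them is a correct value, whence `w ≤ b`. For the lower bound,
either `w ≥ v ≥ a`, or `w` sits at a position `i ≥ f`, so at least `f + 1` gathered values
are `≤ w` and the same argument gives `a ≤ w`. The average of `v` and the surviving values
is then a mean of numbers in `[a, b]`.
-/

/-- The paper's asymmetric reducing procedure (case where at least `f+1` gathered values
are `≥ v`): from the ascending sorted list of `S`, remove the last `min f (card S)`
entries (the `f` largest elements), and among the first `min f (card S)` entries of the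
sorted list of `S` (the `f` smallest elements) additionally remove those that are
strictly less than `v`. -/
noncomputable def Multiset.reduceUp (S : Multiset ℝ) (f : ℕ) (v : ℝ) : Multiset ℝ :=
  let L := S.sort (· ≤ ·)
  let L' := L.take (L.length - f)
  (((L'.take f).filter (fun x => v ≤ x) ++ L'.drop f : List ℝ) : Multiset ℝ)

namespace Multiset

section Order

variable {α : Type*}

theorem card_filter_le_card_sub_card {S T : Multiset α} (hTS : T ≤ S) (p : α → Prop)
    [DecidablePred p] (hT : ∀ x ∈ T, ¬ p x) : (S.filter p).card ≤ S.card - T.card := by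
  obtain ⟨U, rfl⟩ := le_iff_exists_add.mp hTS
  rw [filter_add, filter_eq_nil.mpr hT, zero_add, card_add, Nat.add_sub_cancel_left]
  exact card_le_card (filter_le p U)

variable [LinearOrder α] (S : Multiset α)

theorem le_of_card_filter_lt_card_filter {w b : α}
    (h : (S.filter (b < ·)).card < (S.filter (w ≤ ·)).card) : w ≤ b := by
  by_contra! hbw
  exact h.not_ge <| card_le_card <| monotone_filter_right S fun x hx => hbw.trans_le hx

theorem le_of_card_filter_lt_card_filter' {w a : α}
    (h : (S.filter (· < a)).card < (S.filter (· ≤ w)).card) : a ≤ w := by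
  by_contra! hwa
  exact h.not_ge <| card_le_card <| monotone_filter_right S fun x hx => hx.trans_lt hwa

theorem card_sub_le_card_filter_sort_getElem_le {i : ℕ} (hi : i < (S.sort (· ≤ ·)).length) :
    S.card - i ≤ (S.filter ((S.sort (· ≤ ·))[i] ≤ ·)).card := by
  set L := S.sort (· ≤ ·)
  have hL : L.SortedLE := (S.pairwise_sort _).sortedLE
  have hdrop : ((L.drop i : List α) : Multiset α) ≤ S.filter (L[i] ≤ ·) := by
    refine le_filter.mpr ⟨?_, fun x hx => ?_⟩
    · conv_rhs => rw [← S.sort_eq (· ≤ ·)]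
      exact coe_le.mpr (List.drop_sublist i L).subperm
    · obtain ⟨j, hj, rfl⟩ := List.mem_iff_getElem.mp (mem_coe.mp hx)
      simp only [List.length_drop] at hj
      simpa using hL.getElem_le_getElem_of_le (hj := by omega) (Nat.le_add_right i j)
  simpa [L] using card_le_card hdrop

theorem lt_card_filter_le_sort_getElem {i : ℕ} (hi : i < (S.sort (· ≤ ·)).length) :
    i < (S.filter (· ≤ (S.sort (· ≤ ·))[i])).card := by
  set L := S.sort (· ≤ ·)
  have hL : L.SortedLE := (S.pairwise_sort _).sortedLE
  have htake : ((L.take (i + 1) : List α) : Multiset α) ≤ S.filter (· ≤ L[i]) := by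
    refine le_filter.mpr ⟨?_, fun x hx => ?_⟩
    · conv_rhs => rw [← S.sort_eq (· ≤ ·)]
      exact coe_le.mpr (List.take_sublist (i + 1) L).subperm
    · obtain ⟨j, hj, rfl⟩ := List.mem_iff_getElem.mp (mem_coe.mp hx)
      simp only [List.length_take] at hj
      simpa using hL.getElem_le_getElem_of_le (hi := by omega) (by omega : j ≤ i)
  have := card_le_card htake
  simp only [coe_card, List.length_take, L] at this ⊢
  omega

end Order

theorem sum_div_card_mem_Icc_s3 {K : Type*} [Field K] [LinearOrder K] [IsStrictOrderedRing K]
    {M : Multiset K} (hM : M ≠ 0) {a b : K} (h : ∀ x ∈ M, x ∈ Set.Icc a b) :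
    M.sum / M.card ∈ Set.Icc a b := by
  have hcard : (0 : K) < M.card := by exact_mod_cast card_pos.mpr hM
  have hlo := card_nsmul_le_sum fun x hx => (h x hx).1
  have hhi := sum_le_card_nsmul M b fun x hx => (h x hx).2
  rw [nsmul_eq_mul] at hlo hhi
  exact ⟨(le_div_iff₀ hcard).mpr (by linarith), (div_le_iff₀ hcard).mpr (by linarith)⟩

theorem exists_sort_getElem_eq_of_mem_reduceUp {S : Multiset ℝ} {f : ℕ} {v w : ℝ}
    (h : w ∈ S.reduceUp f v) :
    ∃ i : ℕ, ∃ hi : i < (S.sort (· ≤ ·)).length,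
      (S.sort (· ≤ ·))[i] = w ∧ i + f < (S.sort (· ≤ ·)).length ∧ (v ≤ w ∨ f ≤ i) := by
  unfold reduceUp at h
  rw [mem_coe, List.mem_append] at h
  rcases h with h | h
  · obtain ⟨hmem, hvw⟩ := List.mem_filter.mp h
    obtain ⟨i, hi, hw⟩ := List.mem_iff_getElem.mp (List.mem_of_mem_take hmem)
    simp only [List.length_take] at hi
    rw [List.getElem_take] at hw
    exact ⟨i, by omega, hw, by omega, Or.inl (of_decide_eq_true hvw)⟩
  · obtain ⟨j, hj, hw⟩ := List.mem_iff_getElem.mp h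
    simp only [List.length_drop, List.length_take] at hj
    rw [List.getElem_drop, List.getElem_take] at hw
    exact ⟨f + j, by omega, hw, by omega, Or.inr (by omega)⟩

theorem mem_Icc_of_mem_reduceUp {f : ℕ} {a b v w : ℝ} {S T : Multiset ℝ} (hTS : T ≤ S)
    (hf : S.card - T.card ≤ f) (hT : ∀ x ∈ T, x ∈ Set.Icc a b) (hv : a ≤ v)
    (hw : w ∈ S.reduceUp f v) : w ∈ Set.Icc a b := by
  obtain ⟨i, hi, rfl, hif, hcase⟩ := exists_sort_getElem_eq_of_mem_reduceUp hw
  have hlen : (S.sort (· ≤ ·)).length = S.card := length_sort _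
  refine ⟨?_, ?_⟩
  · rcases hcase with hvw | hfi
    · exact hv.trans hvw
    · apply le_of_card_filter_lt_card_filter' S
      have := card_filter_le_card_sub_card hTS (· < a) fun x hx => not_lt.mpr (hT x hx).1
      have := lt_card_filter_le_sort_getElem S hi
      omega
  · apply le_of_card_filter_lt_card_filter S
    have := card_filter_le_card_sub_card hTS (b < ·) fun x hx => not_lt.mpr (hT x hx).2
    have := card_sub_le_card_filter_sort_getElem_le S hi
    omega

end Multiset

theorem stmt_3_general (f : ℕ) (a b : ℝ) (S T : Multiset ℝ)
    (hTS : T ≤ S) (hf : S.card - T.card ≤ f)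
    (hT : ∀ x ∈ T, x ∈ Set.Icc a b) (v : ℝ) (hv : a ≤ v) (hv' : v ≤ b) :
    (∀ w ∈ S.reduceUp f v, w ∈ Set.Icc a b) ∧
    (v + (S.reduceUp f v).sum) / ((S.reduceUp f v).card + 1) ∈ Set.Icc a b := by
  have hR : ∀ w ∈ S.reduceUp f v, w ∈ Set.Icc a b :=
    fun w hw => Multiset.mem_Icc_of_mem_reduceUp hTS hf hT hv hw
  refine ⟨hR, ?_⟩
  have hmean := Multiset.sum_div_card_mem_Icc_s3 (Multiset.cons_ne_zero (a := v))
    (Multiset.forall_mem_cons.mpr ⟨⟨hv, hv'⟩, hR⟩)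
  simpa only [Multiset.sum_cons, Multiset.card_cons, Nat.cast_add, Nat.cast_one] using hmean

/-- validity of the asymmetric reduce-and-average step, in the case where
at least `f+1` elements of `S` are `≥ v`. -/
theorem stmt_3 (f : ℕ) (a b : ℝ) (hab : a ≤ b) (S T : Multiset ℝ)
    (hTS : T ≤ S) (hf : S.card - T.card ≤ f)
    (hT : ∀ x ∈ T, x ∈ Set.Icc a b) (v : ℝ) (hv : a ≤ v) (hv' : v ≤ b)
    (hquorum : f + 1 ≤ (S.filter (fun x => v ≤ x)).card) :
    (∀ w ∈ S.reduceUp f v, w ∈ Set.Icc a b) ∧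
    (v + (S.reduceUp f v).sum) / ((S.reduceUp f v).card + 1) ∈ Set.Icc a b :=
  stmt_3_general f a b S T hTS hf hT v hv hv'
end

section
/- Let f be a natural number, δ > 0, I a finite set with card I ≥ 2f+1, and v : I → ℝ. Write m = min over i ∈ I of v(i) and M = max over i ∈ I of v(i), and suppose M − m ≥ 2δ. Then either at least f+1 indices i ∈ I satisfy v(i) ≥ m + δ, or at least f+1 indices i ∈ I satisfy v(i) ≤ M − δ. -/
/-- with at least `2f+1` correct nodes and `M - m ≥ 2δ`, either at least
`f+1` nodes have a value `≥ m + δ`, or at least `f+1` nodes have a value `≤ M - δ`. -/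
theorem stmt_9 (f : ℕ) (δ : ℝ) (hδ : 0 < δ) {X : Type*} (I : Finset X)
    (hI : 2 * f + 1 ≤ I.card) (v : X → ℝ)
    (hgap : 2 * δ ≤ I.sup' (Finset.card_pos.mp (by omega)) v -
        I.inf' (Finset.card_pos.mp (by omega)) v) :
    f + 1 ≤ (I.filter (fun i => I.inf' (Finset.card_pos.mp (by omega)) v + δ ≤ v i)).card ∨
    f + 1 ≤ (I.filter (fun i => v i ≤ I.sup' (Finset.card_pos.mp (by omega)) v - δ)).card := by
  classical
  by_contra h
  push_neg at h
  obtain ⟨h1, h2⟩ := h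
  set hne : I.Nonempty := Finset.card_pos.mp (by omega)
  set m := I.inf' hne v with hm
  set M := I.sup' hne v with hM
  have hsub : I ⊆ (I.filter (fun i => m + δ ≤ v i)) ∪
      (I.filter (fun i => v i ≤ M - δ)) := by
    intro i hi
    rcases le_or_gt (m + δ) (v i) with hc | hc
    · exact Finset.mem_union_left _ (Finset.mem_filter.mpr ⟨hi, hc⟩)
    · exact Finset.mem_union_right _ (Finset.mem_filter.mpr ⟨hi, by linarith⟩)
  have := Finset.card_le_card hsub
  have := Finset.card_union_le (I.filter (fun i => m + δ ≤ v i))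
      (I.filter (fun i => v i ≤ M - δ))
  omega
end

section
/- Let f ≥ 1 be a natural number, δ > 0, and m, M real numbers with M − m ≥ 2δ. Then there exists a finite set I with card I = 2f and a function v : I → ℝ such that: min over i ∈ I of v(i) = m, max over i ∈ I of v(i) = M, exactly one index has value m, exactly one index has value M, f−1 indices have values in the open interval (m, m+δ), f−1 indices have values in the open interval (M−δ, M), the number of indices i with v(i) ≥ m + δ is at most f, and the number of indices i with v(i) ≤ M − δ is at most f. -/
/-!
Put one value at `m`, `f - 1` values at `m + δ/2`, `f - 1` values at `M - δ/2` and one at `M`.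
Since `m + δ ≤ M - δ`, the values `≥ m + δ` are exactly the upper `f` ones and the values
`≤ M - δ` exactly the lower `f` ones.
-/

open Finset

theorem card_filter_range_eq_sub_of_iff {n a b : ℕ} {p : ℕ → Prop} [DecidablePred p]
    (hp : ∀ i < n, p i ↔ a ≤ i ∧ i < b) (hb : b ≤ n) :
    ((range n).filter p).card = b - a := by
  have : (range n).filter p = Ico a b := by
    ext i
    simp only [mem_filter, mem_range, mem_Ico]
    exact ⟨fun ⟨hi, h⟩ => (hp i hi).1 h, fun h => ⟨by omega, (hp i (by omega)).2 h⟩⟩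
  rw [this, Nat.card_Ico]

noncomputable def clusteredValues (f : ℕ) (δ m M : ℝ) (i : ℕ) : ℝ :=
  if i = 0 then m else if i < f then m + δ / 2 else if i < 2 * f - 1 then M - δ / 2 else M

/-- the counterexample with `2f` correct nodes showing `n ≥ 3f+1` is
necessary: a distribution of values with one node at `m`, one node at `M`, `f-1` nodes
in `(m, m+δ)`, `f-1` nodes in `(M-δ, M)`, such that at most `f` nodes have a value
`≥ m + δ` and at most `f` nodes have a value `≤ M - δ`. -/
theorem stmt_10 (f : ℕ) (hf : 1 ≤ f) (δ m M : ℝ) (hδ : 0 < δ) (hgap : 2 * δ ≤ M - m) :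
    ∃ (I : Finset ℕ) (v : ℕ → ℝ) (hne : I.Nonempty),
      I.card = 2 * f ∧
      I.inf' hne v = m ∧
      I.sup' hne v = M ∧
      (I.filter (fun i => v i = m)).card = 1 ∧
      (I.filter (fun i => v i = M)).card = 1 ∧
      (I.filter (fun i => m < v i ∧ v i < m + δ)).card = f - 1 ∧
      (I.filter (fun i => M - δ < v i ∧ v i < M)).card = f - 1 ∧
      (I.filter (fun i => m + δ ≤ v i)).card ≤ f ∧
      (I.filter (fun i => v i ≤ M - δ)).card ≤ f := by
  set v := clusteredValues f δ m M
  have hne : (range (2 * f)).Nonempty := nonempty_range_iff.2 (by omega)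
  refine ⟨range (2 * f), v, hne, card_range _, ?_, ?_, ?_, ?_, ?_, ?_, ?_, ?_⟩
  · exact le_antisymm (inf'_le_of_le v (b := 0) (by simp; omega) (by simp [v, clusteredValues]))
      (le_inf' _ _ fun i _ => by grind [clusteredValues])
  · exact le_antisymm (sup'_le _ _ fun i _ => by grind [clusteredValues])
      (le_sup'_of_le v (b := 2 * f - 1) (by simp; omega) (by grind [clusteredValues]))
  · exact card_filter_range_eq_sub_of_iff (a := 0) (b := 1)
      (fun i _ => by grind [clusteredValues]) (by omega)
  · rw [card_filter_range_eq_sub_of_iff (a := 2 * f - 1) (b := 2 * f)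
      (fun i _ => by grind [clusteredValues]) le_rfl]
    omega
  · exact card_filter_range_eq_sub_of_iff (a := 1) (b := f)
      (fun i _ => by grind [clusteredValues]) (by omega)
  · rw [card_filter_range_eq_sub_of_iff (a := f) (b := 2 * f - 1)
      (fun i _ => by grind [clusteredValues]) (by omega)]
    omega
  · rw [card_filter_range_eq_sub_of_iff (a := f) (b := 2 * f)
      (fun i _ => by grind [clusteredValues]) le_rfl]
    omega
  · rw [card_filter_range_eq_sub_of_iff (a := 0) (b := f)
      (fun i _ => by grind [clusteredValues]) (by omega)]
    omega
end
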